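/- arXiv:2412.05942 — 2 statements merged into one kernel-verified Lean document; each statement's English description precedes it below -/
import Mathlib

section
/- Let n ≥ 1 and let θ be an n×n matrix with nonnegative real entries such that ∏_{i} θ(i,σ(i)) > 0 for at least one permutation σ ∈ S_n. Then limsup_{M→∞} perm(θ ⊗ U_{M,M})^{1/M} = sup_γ exp( Σ_{i,j} γ(i,j)·log θ(i,j) − n − Σ_{i,j} γ(i,j)·log γ(i,j) ), where the supremum is over all n×n doubly stochastic real matrices γ (nonnegative entries, every row sum and every column sum equal to 1) satisfying γ(i,j) = 0 whenever θ(i,j) = 0, with the convention 0·log 0 = 0 (so entries with θ(i,j) = 0 contribute 0) and log the natural logarithm. In other words, the limsup of the degree-M scaled Sinkhorn permanents equals the scaled Sinkhorn permanent exp(−min_γ F_{scS,θ}(γ)). -/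
open scoped BigOperators

noncomputable section

/-- The permanent of a real square matrix: `perm(A) = Σ_{σ} ∏_i A(i, σ(i))`. -/
def perm' {α : Type*} [Fintype α] [DecidableEq α] (A : Matrix α α ℝ) : ℝ :=
  ∑ σ : Equiv.Perm α, ∏ i, A i (σ i)

/-!
Sort the permutations of `ι × Fin M` by their block type `γ`, where `γ i j` counts the `a` with
`σ (i, a) ∈ {j} × Fin M`. Every permutation of type `γ` has weight `M^(-nM) ∏ θ i j ^ γ i j` in
`perm (θ ⊗ U_{M,M})`, and there are exactly `(M!)^(2n) / ∏ (γ i j)!` of them. With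
`log k! = k log k - k + O(log k)`, the total weight of type `γ` is
`exp (M · (-F_{scS,θ}(γ / M)) + O(n² log M))`, and there are at most `(M+1)^(n²)` types, so
`M⁻¹ log perm ≤ sup (-F_{scS,θ}) + o(1)`. Conversely, by Birkhoff's theorem every admissible `γ` is
a convex combination of permutation matrices; rounding `M` times its weights gives block types
`γ_M` with `γ_M / M → γ`, and continuity of `F_{scS,θ}` gives `M⁻¹ log perm ≥ -F_{scS,θ}(γ) - o(1)`.
Hence `perm (θ ⊗ U_{M,M})^(1/M)` even converges, to `exp (sup (-F_{scS,θ}))`.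
-/

open Finset Real Filter Topology

open scoped Nat

section Stirling

def stirlingError (k : ℕ) : ℝ := log k ! - (k * log k - k)

lemma stirlingError_nonneg (k : ℕ) : 0 ≤ stirlingError k := by
  rcases Nat.eq_zero_or_pos k with rfl | hk
  · simp [stirlingError]
  have h := pow_div_factorial_le_exp (x := (k : ℝ)) (Nat.cast_nonneg k) k
  rw [div_le_iff₀ (by positivity)] at h
  have := log_le_log (by positivity) h
  rw [log_mul (by positivity) (by positivity), log_exp, log_pow] at this
  unfold stirlingError
  linarith

lemma stirlingError_le (k : ℕ) : stirlingError k ≤ 1 + log k := by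
  rcases Nat.eq_zero_or_pos k with rfl | hk
  · simp [stirlingError]
  -- `log (stirlingSeq k) ≤ log (stirlingSeq 1)`, where `stirlingSeq k = k! / (√(2k) (k/e)^k)`
  have hanti := Stirling.log_stirlingSeq'_antitone (Nat.zero_le (k - 1))
  simp only [Function.comp_apply, Nat.succ_eq_add_one, Nat.sub_add_cancel hk, zero_add,
    Stirling.stirlingSeq_one, Stirling.log_stirlingSeq_formula] at hanti
  have hk' : (0 : ℝ) < k := by exact_mod_cast hk
  have hsqrt : log (exp 1 / √2) = 1 - log 2 / 2 := by
    rw [log_div (exp_pos 1).ne' (by positivity), log_exp, log_sqrt (by norm_num)]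
  rw [hsqrt, log_mul (by norm_num) hk'.ne', log_div hk'.ne' (exp_pos 1).ne',
    log_exp] at hanti
  have : 0 ≤ log k := log_natCast_nonneg k
  have : 0 ≤ log 2 := log_nonneg (by norm_num)
  unfold stirlingError
  nlinarith

lemma stirlingError_le_of_le {k M : ℕ} (hkM : k ≤ M) : stirlingError k ≤ 1 + log M := by
  refine (stirlingError_le k).trans (add_le_add_right ?_ 1)
  rcases Nat.eq_zero_or_pos k with rfl | hk
  · simpa using log_natCast_nonneg M
  · exact log_le_log (by positivity) (by exact_mod_cast hkM)

end Stirling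

section Limit

lemma natCast_add_one_le_exp_one_add_log {M : ℕ} (hM : 0 < M) : (M + 1 : ℝ) ≤ exp (1 + log M) := by
  have he : (2 : ℝ) ≤ exp 1 := by linarith [add_one_le_exp (1 : ℝ)]
  have hM' : (1 : ℝ) ≤ M := by exact_mod_cast hM
  rw [exp_add, exp_log (by positivity)]
  nlinarith

lemma tendsto_csSup_of_upper_of_lower {α β : Type*} [ConditionallyCompleteLinearOrder α]
    [TopologicalSpace α] [OrderTopology α] {l : Filter β} {a : β → α} {S : Set α}
    (hS : S.Nonempty) (hup : ∃ u : β → α, Tendsto u l (𝓝 (sSup S)) ∧ ∀ᶠ x in l, a x ≤ u x)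
    (hlow : ∀ s ∈ S, ∃ b : β → α, Tendsto b l (𝓝 s) ∧ ∀ᶠ x in l, b x ≤ a x) :
    Tendsto a l (𝓝 (sSup S)) := by
  refine tendsto_order.2 ⟨fun c hc => ?_, fun c hc => ?_⟩
  · obtain ⟨s, hs, hcs⟩ := exists_lt_of_lt_csSup hS hc
    obtain ⟨b, hb, hba⟩ := hlow s hs
    filter_upwards [(tendsto_order.1 hb).1 c hcs, hba] with x h1 h2 using h1.trans_le h2
  · obtain ⟨u, hu, hau⟩ := hup
    filter_upwards [(tendsto_order.1 hu).2 c hc, hau] with x h1 h2 using h2.trans_lt h1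

lemma tendsto_one_add_log_div_atTop : Tendsto (fun M : ℕ => (1 + log M) / M) atTop (𝓝 0) := by
  have h := (tendsto_pow_log_div_mul_add_atTop 1 0 1 one_ne_zero).comp tendsto_natCast_atTop_atTop
  simpa [add_div] using (tendsto_one_div_atTop_nhds_zero_nat (𝕜 := ℝ)).add h

lemma tendsto_rpow_one_div_of_tendsto_log_div {a : ℕ → ℝ} {L : ℝ}
    (hpos : ∀ᶠ M in atTop, 0 < a M) (h : Tendsto (fun M : ℕ => log (a M) / M) atTop (𝓝 L)) :
    Tendsto (fun M : ℕ => a M ^ (1 / (M : ℝ))) atTop (𝓝 (exp L)) := by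
  refine ((continuous_exp.tendsto L).comp h).congr' ?_
  filter_upwards [hpos] with M hM
  rw [Function.comp_apply, rpow_def_of_pos hM, mul_one_div]

end Limit

section FiberCounting

variable {α β : Type*} [Fintype α] [DecidableEq α] [Fintype β] [DecidableEq β]

def equivSigmaOverEquiv {X : β → Type*} (f : α → β) :
    {e : α ≃ Σ j, X j // ∀ a, (e a).1 = f a} ≃ ∀ j, ({a // f a = j} ≃ X j) where
  toFun e j := (e.1.subtypeEquiv fun a => by rw [e.2 a]).trans (Equiv.sigmaSubtype j)
  invFun g := ⟨(Equiv.sigmaFiberEquiv f).symm.trans (Equiv.sigmaCongrRight g), fun _ => rfl⟩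
  left_inv := by
    rintro ⟨e, he⟩
    have key (s : Σ j, X j) (b : β) (h : s.1 = b) :
        (⟨b, Equiv.sigmaSubtype b ⟨s, h⟩⟩ : Σ j, X j) = s := by
      obtain ⟨j, x⟩ := s
      cases h
      rfl
    exact Subtype.ext (Equiv.ext fun a => key (e a) (f a) (he a))
  right_inv g := by
    funext j
    ext ⟨a, rfl⟩
    rfl

lemma card_equivSigma_over {X : β → Type*} [∀ j, Fintype (X j)] [∀ j, DecidableEq (X j)]
    (f : α → β) (hf : ∀ j, Fintype.card {a // f a = j} = Fintype.card (X j)) :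
    Fintype.card {e : α ≃ Σ j, X j // ∀ a, (e a).1 = f a} = ∏ j, (Fintype.card (X j))! := by
  rw [Fintype.card_congr (equivSigmaOverEquiv f), Fintype.card_pi]
  refine prod_congr rfl fun j _ => ?_
  rw [← hf j]
  exact Fintype.card_equiv (Fintype.equivOfCardEq (hf j))

lemma card_equivSigma_over_eq_zero {X : β → Type*} [∀ j, Fintype (X j)]
    [∀ j, DecidableEq (X j)] (f : α → β) {j : β}
    (hj : Fintype.card {a // f a = j} ≠ Fintype.card (X j)) :
    Fintype.card {e : α ≃ Σ j, X j // ∀ a, (e a).1 = f a} = 0 := by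
  rw [Fintype.card_congr (equivSigmaOverEquiv f), Fintype.card_eq_zero_iff]
  exact ⟨fun g => hj (Fintype.card_congr (g j))⟩

theorem card_fun_with_fiber_card_mul_prod_factorial (κ : β → ℕ) (hκ : ∑ j, κ j = Fintype.card α) :
    Fintype.card {f : α → β // ∀ j, Fintype.card {a // f a = j} = κ j} * ∏ j, (κ j)! =
      (Fintype.card α)! := by
  -- Sort the `(card α)!` equivalences `α ≃ Σ j, Fin (κ j)` by the map `a ↦ (e a).1`.
  have hcard : Fintype.card α = Fintype.card (Σ j, Fin (κ j)) := by simp [hκ]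
  have hsplit := Fintype.card_congr
    (Equiv.sigmaFiberEquiv fun (e : α ≃ Σ j, Fin (κ j)) a => (e a).1)
  rw [Fintype.card_equiv (Fintype.equivOfCardEq hcard), Fintype.card_sigma] at hsplit
  rw [← hsplit, Fintype.card_subtype, card_eq_sum_ones, sum_mul, sum_filter]
  refine sum_congr rfl fun f _ => ?_
  have hover : Fintype.card {e : α ≃ Σ j, Fin (κ j) // (fun a => (e a).1) = f} =
      Fintype.card {e : α ≃ Σ j, Fin (κ j) // ∀ a, (e a).1 = f a} :=
    Fintype.card_congr (Equiv.subtypeEquivRight fun _ => funext_iff)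
  rw [hover]
  split_ifs with hf
  · rw [one_mul, card_equivSigma_over f (by simpa using hf)]
    simp
  · push Not at hf
    obtain ⟨j, hj⟩ := hf
    rw [card_equivSigma_over_eq_zero f (j := j) (by simpa using hj)]

end FiberCounting

section BlockCount

variable {ι κ : Type*} [Fintype ι] [DecidableEq ι] [Fintype κ]

def blockCount (F : ι × κ → ι) : Matrix ι ι ℕ :=
  Matrix.of fun i j => Fintype.card {a // F (i, a) = j}

lemma sum_blockCount_row (F : ι × κ → ι) (i : ι) :
    ∑ j, blockCount F i j = Fintype.card κ := by
  simp only [blockCount, Matrix.of_apply]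
  rw [← Fintype.card_sigma]
  exact Fintype.card_congr (Equiv.sigmaFiberEquiv _)

lemma sum_blockCount_col (F : ι × κ → ι) (j : ι) :
    ∑ i, blockCount F i j = Fintype.card {p // F p = j} := by
  simp only [blockCount, Matrix.of_apply]
  rw [← Fintype.card_sigma]
  exact Fintype.card_congr (Equiv.subtypeProdEquivSigmaSubtype fun i a => F (i, a) = j).symm

def blockType (σ : Equiv.Perm (ι × κ)) : Matrix ι ι ℕ :=
  blockCount fun p => (σ p).1

lemma sum_blockType_row (σ : Equiv.Perm (ι × κ)) (i : ι) :
    ∑ j, blockType σ i j = Fintype.card κ :=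
  sum_blockCount_row _ i

lemma sum_blockType_col (σ : Equiv.Perm (ι × κ)) (j : ι) :
    ∑ i, blockType σ i j = Fintype.card κ := by
  rw [blockType, sum_blockCount_col, Fintype.card_congr (σ.subtypeEquiv fun _ => Iff.rfl :
      {p // (σ p).1 = j} ≃ {q : ι × κ // q.1 = j}),
    Fintype.card_congr (Equiv.prodSubtypeFstEquivSubtypeProd (p := (· = j))), Fintype.card_prod]
  simp

lemma prod_kroneckerMap_const_apply_perm (θ : Matrix ι ι ℝ) (c : ℝ) (σ : Equiv.Perm (ι × κ)) :
    ∏ p, Matrix.kroneckerMap (· * ·) θ (Matrix.of fun _ _ : κ => c) p (σ p) =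
      c ^ (Fintype.card ι * Fintype.card κ) * ∏ i, ∏ j, θ i j ^ blockType σ i j := by
  simp only [Matrix.kroneckerMap_apply, Matrix.of_apply, prod_mul_distrib, prod_const,
    card_univ, Fintype.card_prod, Fintype.prod_prod_type]
  rw [mul_comm]
  congr 1
  refine prod_congr rfl fun i _ => ?_
  rw [← prod_fiberwise' univ (fun a => (σ (i, a)).1) (θ i)]
  refine prod_congr rfl fun j _ => ?_
  rw [prod_const, blockType, blockCount, Matrix.of_apply, Fintype.card_subtype]

variable [DecidableEq κ]

theorem card_blockCount_eq_mul_prod_factorial (γ : Matrix ι ι ℕ)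
    (hrow : ∀ i, ∑ j, γ i j = Fintype.card κ) :
    Fintype.card {F : ι × κ → ι // blockCount F = γ} * ∏ i, ∏ j, (γ i j)! =
      (Fintype.card κ)! ^ Fintype.card ι := by
  have hcurry : {F : ι × κ → ι // blockCount F = γ} ≃
      ∀ i, {g : κ → ι // ∀ j, Fintype.card {a // g a = j} = γ i j} :=
    ((Equiv.curry ι κ ι).subtypeEquiv fun F => by
      simp [← Matrix.ext_iff, blockCount]).trans Equiv.subtypePiEquivPi
  rw [Fintype.card_congr hcurry, Fintype.card_pi, ← prod_mul_distrib]
  exact (prod_congr rfl fun i _ => card_fun_with_fiber_card_mul_prod_factorial (γ i) (hrow i)).trans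
    (by simp)

lemma card_perm_over (F : ι × κ → ι)
    (hF : ∀ j, Fintype.card {p // F p = j} = Fintype.card κ) :
    Fintype.card {σ : Equiv.Perm (ι × κ) // (fun p => (σ p).1) = F} =
      (Fintype.card κ)! ^ Fintype.card ι := by
  have e : {σ : Equiv.Perm (ι × κ) // (fun p => (σ p).1) = F} ≃
      {e : ι × κ ≃ Σ _ : ι, κ // ∀ p, (e p).1 = F p} :=
    (Equiv.equivCongr (Equiv.refl _) (Equiv.sigmaEquivProd ι κ).symm).subtypeEquiv
      fun _ => funext_iff
  rw [Fintype.card_congr e, card_equivSigma_over F hF]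
  simp

theorem card_blockType_mul_prod_factorial (γ : Matrix ι ι ℕ)
    (hrow : ∀ i, ∑ j, γ i j = Fintype.card κ) (hcol : ∀ j, ∑ i, γ i j = Fintype.card κ) :
    Fintype.card {σ : Equiv.Perm (ι × κ) // blockType σ = γ} * ∏ i, ∏ j, (γ i j)! =
      (Fintype.card κ)! ^ (2 * Fintype.card ι) := by
  have hsplit : {σ : Equiv.Perm (ι × κ) // blockType σ = γ} ≃
      Σ F : {F : ι × κ → ι // blockCount F = γ},
        {σ : Equiv.Perm (ι × κ) // (fun p => (σ p).1) = F.1} :=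
    { toFun σ := ⟨⟨_, σ.2⟩, σ.1, rfl⟩
      invFun x := ⟨x.2.1, by rw [blockType, x.2.2]; exact x.1.2⟩
      left_inv _ := rfl
      right_inv := by
        rintro ⟨⟨F, hF⟩, σ, hσ⟩
        change (fun p => (σ p).1) = F at hσ
        subst hσ
        rfl }
  have hfiber (F : {F : ι × κ → ι // blockCount F = γ}) :
      Fintype.card {σ : Equiv.Perm (ι × κ) // (fun p => (σ p).1) = F.1} =
        (Fintype.card κ)! ^ Fintype.card ι :=
    card_perm_over F.1 fun j => by rw [← sum_blockCount_col, F.2, hcol]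
  rw [Fintype.card_congr hsplit, Fintype.card_sigma, sum_congr rfl fun F _ => hfiber F,
    sum_const, card_univ, smul_eq_mul, mul_right_comm,
    card_blockCount_eq_mul_prod_factorial γ hrow, ← pow_add, two_mul]

lemma card_image_blockType_le :
    #((univ : Finset (Equiv.Perm (ι × κ))).image blockType) ≤
      (Fintype.card κ + 1) ^ (Fintype.card ι * Fintype.card ι) := by
  have hsub : (univ : Finset (Equiv.Perm (ι × κ))).image blockType ⊆
      Fintype.piFinset fun _ => Fintype.piFinset fun _ => range (Fintype.card κ + 1) := by
    intro γ hγ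
    obtain ⟨σ, -, rfl⟩ := mem_image.1 hγ
    refine Fintype.mem_piFinset.2 fun i => Fintype.mem_piFinset.2 fun j => mem_range.2 ?_
    exact Nat.lt_succ_of_le (Fintype.card_subtype_le _)
  refine (card_le_card hsub).trans_eq ?_
  change #(Fintype.piFinset fun _ : ι => Fintype.piFinset fun _ : ι =>
    range (Fintype.card κ + 1) : Finset (ι → ι → ℕ)) = _
  simp [pow_mul]

theorem perm'_kroneckerMap_const (θ : Matrix ι ι ℝ) (c : ℝ) :
    perm' (Matrix.kroneckerMap (· * ·) θ (Matrix.of fun _ _ : κ => c)) =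
      ∑ γ ∈ (univ : Finset (Equiv.Perm (ι × κ))).image blockType,
        (Fintype.card {σ : Equiv.Perm (ι × κ) // blockType σ = γ} : ℝ) *
          (c ^ (Fintype.card ι * Fintype.card κ) * ∏ i, ∏ j, θ i j ^ γ i j) := by
  simp only [perm', prod_kroneckerMap_const_apply_perm]
  rw [sum_comp (fun γ : Matrix ι ι ℕ => c ^ (Fintype.card ι * Fintype.card κ) *
    ∏ i, ∏ j, θ i j ^ γ i j) blockType]
  simp only [nsmul_eq_mul, Fintype.card_subtype]

end BlockCount

section Objective

variable {ι : Type*} [Fintype ι]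

/-- `-F_{scS,θ}(γ)` in the notation of the paper. -/
def sinkhornObjective (θ γ : Matrix ι ι ℝ) : ℝ :=
  ∑ i, ∑ j, γ i j * log (θ i j) - Fintype.card ι + ∑ i, ∑ j, negMulLog (γ i j)

lemma mul_sinkhornObjective_inv_smul (θ A : Matrix ι ι ℝ) {M : ℝ} (hM : M ≠ 0) :
    M * sinkhornObjective θ (M⁻¹ • A) =
      ∑ i, ∑ j, A i j * log (θ i j) - Fintype.card ι * M + ∑ i, ∑ j, negMulLog (A i j) +
        (∑ i, ∑ j, A i j) * log M := by
  have hentropy (x : ℝ) : M * negMulLog (M⁻¹ * x) = negMulLog x + x * log M := by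
    rw [negMulLog_mul, negMulLog, log_inv]
    field_simp
    ring
  simp only [sinkhornObjective, Matrix.smul_apply, smul_eq_mul, mul_add, mul_sub, mul_sum,
    hentropy, sum_add_distrib, sum_mul, ← mul_assoc, mul_inv_cancel₀ hM, one_mul]
  ring

lemma continuous_sinkhornObjective (θ : Matrix ι ι ℝ) : Continuous (sinkhornObjective θ) := by
  unfold sinkhornObjective
  fun_prop

variable [DecidableEq ι]

def supportedDoublyStochastic (θ : Matrix ι ι ℝ) : Set (Matrix ι ι ℝ) :=
  {γ | γ ∈ doublyStochastic ℝ ι ∧ ∀ i j, θ i j = 0 → γ i j = 0}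

lemma sinkhornObjective_le (θ : Matrix ι ι ℝ) {γ : Matrix ι ι ℝ}
    (hγ : γ ∈ doublyStochastic ℝ ι) :
    sinkhornObjective θ γ ≤ ∑ i, ∑ j, |log (θ i j)| + Fintype.card ι ^ 2 := by
  have hcross : ∑ i, ∑ j, γ i j * log (θ i j) ≤ ∑ i, ∑ j, |log (θ i j)| := by
    gcongr with i _ j _
    calc γ i j * log (θ i j) ≤ γ i j * |log (θ i j)| :=
          mul_le_mul_of_nonneg_left (le_abs_self _) (nonneg_of_mem_doublyStochastic hγ)
      _ ≤ |log (θ i j)| :=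
          mul_le_of_le_one_left (abs_nonneg _) (le_one_of_mem_doublyStochastic hγ)
  have hentropy : ∑ i, ∑ j, negMulLog (γ i j) ≤ ∑ _i : ι, ∑ _j : ι, (1 : ℝ) := by
    gcongr with i _ j _
    have hγij : 0 ≤ γ i j := nonneg_of_mem_doublyStochastic hγ
    linarith [negMulLog_le_one_sub_self hγij]
  simp only [sum_const, card_univ, nsmul_eq_mul, mul_one] at hentropy
  unfold sinkhornObjective
  nlinarith

lemma bddAbove_sinkhornObjective_image (θ : Matrix ι ι ℝ) :
    BddAbove (sinkhornObjective θ '' supportedDoublyStochastic θ) :=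
  ⟨_, by rintro _ ⟨γ, hγ, rfl⟩; exact sinkhornObjective_le θ hγ.1⟩

lemma supportedDoublyStochastic_nonempty {θ : Matrix ι ι ℝ}
    (hex : ∃ σ : Equiv.Perm ι, 0 < ∏ i, θ i (σ i)) :
    (supportedDoublyStochastic θ).Nonempty := by
  obtain ⟨σ, hσ⟩ := hex
  refine ⟨σ.permMatrix ℝ, permMatrix_mem_doublyStochastic, fun i j hθij => ?_⟩
  have hj : σ i ≠ j := by
    rintro rfl
    exact hσ.ne' (prod_eq_zero (mem_univ i) hθij)
  simp [Equiv.Perm.permMatrix, PEquiv.toMatrix_apply, hj]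

end Objective

section BlockTypeWeight

variable {ι : Type*} [Fintype ι] [DecidableEq ι]

/-- `θ ⊗ U_{M,M}`. -/
def uniformBlowup (θ : Matrix ι ι ℝ) (M : ℕ) : Matrix (ι × Fin M) (ι × Fin M) ℝ :=
  Matrix.kroneckerMap (· * ·) θ (Matrix.of fun _ _ : Fin M => 1 / (M : ℝ))

def blockTypeWeight (θ : Matrix ι ι ℝ) (M : ℕ) (γ : Matrix ι ι ℕ) : ℝ :=
  Fintype.card {σ : Equiv.Perm (ι × Fin M) // blockType σ = γ} *
    ((1 / M : ℝ) ^ (Fintype.card ι * M) * ∏ i, ∏ j, θ i j ^ γ i j)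

lemma perm'_uniformBlowup_eq_sum (θ : Matrix ι ι ℝ) (M : ℕ) :
    perm' (uniformBlowup θ M) =
      ∑ γ ∈ (univ : Finset (Equiv.Perm (ι × Fin M))).image blockType, blockTypeWeight θ M γ := by
  rw [uniformBlowup, perm'_kroneckerMap_const, Fintype.card_fin]
  rfl

lemma blockTypeWeight_nonneg {θ : Matrix ι ι ℝ} (hθ : ∀ i j, 0 ≤ θ i j) (M : ℕ)
    (γ : Matrix ι ι ℕ) : 0 ≤ blockTypeWeight θ M γ :=
  mul_nonneg (Nat.cast_nonneg _) (mul_nonneg (by positivity)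
    (prod_nonneg fun i _ => prod_nonneg fun j _ => pow_nonneg (hθ i j) _))

theorem blockTypeWeight_eq_exp {θ : Matrix ι ι ℝ} (hθ : ∀ i j, 0 ≤ θ i j) {M : ℕ}
    (hM : 0 < M) {γ : Matrix ι ι ℕ} (hrow : ∀ i, ∑ j, γ i j = M) (hcol : ∀ j, ∑ i, γ i j = M)
    (hsupp : ∀ i j, θ i j = 0 → γ i j = 0) :
    blockTypeWeight θ M γ =
      exp (M * sinkhornObjective θ ((M : ℝ)⁻¹ • γ.map (↑)) +
        2 * Fintype.card ι * stirlingError M - ∑ i, ∑ j, stirlingError (γ i j)) := by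
  have hM' : (0 : ℝ) < M := by exact_mod_cast hM
  have hfact (k : ℕ) : (k ! : ℝ) = exp (k * log k - k + stirlingError k) := by
    rw [stirlingError, add_sub_cancel, exp_log (by positivity)]
  have hcount : (Fintype.card {σ : Equiv.Perm (ι × Fin M) // blockType σ = γ} : ℝ) =
      (M ! : ℝ) ^ (2 * Fintype.card ι) / ∏ i, ∏ j, ((γ i j)! : ℝ) := by
    refine eq_div_of_mul_eq (by positivity) ?_
    have := card_blockType_mul_prod_factorial (κ := Fin M) γ (by simpa using hrow)
      (by simpa using hcol)
    rw [Fintype.card_fin] at this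
    exact_mod_cast this
  have hpow (i j : ι) : θ i j ^ γ i j = exp (γ i j * log (θ i j)) := by
    rcases (γ i j).eq_zero_or_pos with h | h
    · simp [h]
    have hθij : 0 < θ i j := (hθ i j).lt_of_ne fun h0 => h.ne' (hsupp i j h0.symm)
    rw [exp_nat_mul, exp_log hθij]
  have hscale : (1 / M : ℝ) ^ (Fintype.card ι * M) = exp (-(Fintype.card ι * M * log M)) := by
    rw [exp_neg, ← Nat.cast_mul, exp_nat_mul, exp_log hM', one_div, inv_pow]
  have hmass : ∑ i, ∑ j, (γ i j : ℝ) = Fintype.card ι * M := by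
    simp [← Nat.cast_sum, hrow]
  simp only [blockTypeWeight, hcount, hfact, hpow, hscale, ← exp_sum, ← exp_nat_mul, ← exp_add,
    ← exp_sub]
  congr 1
  rw [mul_sinkhornObjective_inv_smul _ _ hM'.ne']
  simp only [Matrix.map_apply, hmass, negMulLog, sum_add_distrib, sum_sub_distrib,
    sum_neg_distrib, neg_mul]
  push_cast
  ring

lemma inv_smul_map_mem_supportedDoublyStochastic {θ : Matrix ι ι ℝ} {M : ℕ} (hM : 0 < M)
    {γ : Matrix ι ι ℕ} (hrow : ∀ i, ∑ j, γ i j = M) (hcol : ∀ j, ∑ i, γ i j = M)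
    (hsupp : ∀ i j, θ i j = 0 → γ i j = 0) :
    (M : ℝ)⁻¹ • γ.map (↑) ∈ supportedDoublyStochastic θ := by
  have hM' : (M : ℝ) ≠ 0 := by positivity
  refine ⟨mem_doublyStochastic_iff_sum.2 ⟨fun i j => by simp; positivity, fun i => ?_,
    fun j => ?_⟩, fun i j h => by simp [hsupp i j h]⟩
  · simp [← mul_sum, ← Nat.cast_sum, hrow, hM']
  · simp [← mul_sum, ← Nat.cast_sum, hcol, hM']

theorem blockTypeWeight_le {θ : Matrix ι ι ℝ} (hθ : ∀ i j, 0 ≤ θ i j) {M : ℕ} (hM : 0 < M)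
    {γ : Matrix ι ι ℕ} (hrow : ∀ i, ∑ j, γ i j = M) (hcol : ∀ j, ∑ i, γ i j = M) :
    blockTypeWeight θ M γ ≤
      exp (M * sSup (sinkhornObjective θ '' supportedDoublyStochastic θ) +
        2 * Fintype.card ι * (1 + log M)) := by
  by_cases hsupp : ∀ i j, θ i j = 0 → γ i j = 0
  · rw [blockTypeWeight_eq_exp hθ hM hrow hcol hsupp]
    have hφ := le_csSup (bddAbove_sinkhornObjective_image θ) (Set.mem_image_of_mem _
      (inv_smul_map_mem_supportedDoublyStochastic hM hrow hcol hsupp))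
    have hEM := stirlingError_le M
    have hE : 0 ≤ ∑ i, ∑ j, stirlingError (γ i j) :=
      sum_nonneg fun i _ => sum_nonneg fun j _ => stirlingError_nonneg _
    gcongr
    nlinarith
  · push Not at hsupp
    obtain ⟨i, j, hθij, hγij⟩ := hsupp
    rw [blockTypeWeight, prod_eq_zero (mem_univ i)
      (prod_eq_zero (mem_univ j) (by rw [hθij, zero_pow hγij])), mul_zero, mul_zero]
    positivity

theorem exp_le_blockTypeWeight {θ : Matrix ι ι ℝ} (hθ : ∀ i j, 0 ≤ θ i j) {M : ℕ}
    (hM : 0 < M) {γ : Matrix ι ι ℕ} (hrow : ∀ i, ∑ j, γ i j = M) (hcol : ∀ j, ∑ i, γ i j = M)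
    (hsupp : ∀ i j, θ i j = 0 → γ i j = 0) :
    exp (M * sinkhornObjective θ ((M : ℝ)⁻¹ • γ.map (↑)) - Fintype.card ι ^ 2 * (1 + log M)) ≤
      blockTypeWeight θ M γ := by
  have hE : ∑ i, ∑ j, stirlingError (γ i j) ≤ Fintype.card ι ^ 2 * (1 + log M) := by
    calc ∑ i, ∑ j, stirlingError (γ i j) ≤ ∑ _i : ι, ∑ _j : ι, (1 + log M) := by
          gcongr with i _ j _
          exact stirlingError_le_of_le (hrow i ▸ single_le_sum (fun _ _ => Nat.zero_le _)
            (mem_univ j))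
      _ = _ := by simp; ring
  have hEM : 0 ≤ 2 * (Fintype.card ι : ℝ) * stirlingError M :=
    mul_nonneg (by positivity) (stirlingError_nonneg M)
  rw [blockTypeWeight_eq_exp hθ hM hrow hcol hsupp]
  gcongr
  linarith

theorem perm'_uniformBlowup_le {θ : Matrix ι ι ℝ} (hθ : ∀ i j, 0 ≤ θ i j) {M : ℕ} (hM : 0 < M) :
    perm' (uniformBlowup θ M) ≤
      exp (M * sSup (sinkhornObjective θ '' supportedDoublyStochastic θ) +
        (Fintype.card ι + 2) * Fintype.card ι * (1 + log M)) := by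
  have hcard : (#((univ : Finset (Equiv.Perm (ι × Fin M))).image blockType) : ℝ) ≤
      exp (1 + log M) ^ (Fintype.card ι * Fintype.card ι) := by
    have := card_image_blockType_le (ι := ι) (κ := Fin M)
    rw [Fintype.card_fin] at this
    calc _ ≤ ((M + 1 : ℕ) : ℝ) ^ (Fintype.card ι * Fintype.card ι) := by exact_mod_cast this
      _ ≤ _ := by gcongr; exact_mod_cast natCast_add_one_le_exp_one_add_log hM
  calc perm' (uniformBlowup θ M) = _ := perm'_uniformBlowup_eq_sum θ M
    _ ≤ _ := sum_le_card_nsmul _ _ _ fun γ hγ => by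
      obtain ⟨σ, -, rfl⟩ := mem_image.1 hγ
      exact blockTypeWeight_le hθ hM (by simpa using sum_blockType_row σ)
        (by simpa using sum_blockType_col σ)
    _ ≤ exp (1 + log M) ^ (Fintype.card ι * Fintype.card ι) *
        exp (M * sSup (sinkhornObjective θ '' supportedDoublyStochastic θ) +
          2 * Fintype.card ι * (1 + log M)) := by
      rw [nsmul_eq_mul]
      gcongr
    _ = _ := by
      rw [← exp_nat_mul, ← exp_add]
      push_cast
      ring_nf

theorem exp_le_perm'_uniformBlowup {θ : Matrix ι ι ℝ} (hθ : ∀ i j, 0 ≤ θ i j) {M : ℕ}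
    (hM : 0 < M) {γ : Matrix ι ι ℕ} (hrow : ∀ i, ∑ j, γ i j = M) (hcol : ∀ j, ∑ i, γ i j = M)
    (hsupp : ∀ i j, θ i j = 0 → γ i j = 0) :
    exp (M * sinkhornObjective θ ((M : ℝ)⁻¹ • γ.map (↑)) - Fintype.card ι ^ 2 * (1 + log M)) ≤
      perm' (uniformBlowup θ M) := by
  have hweight := exp_le_blockTypeWeight hθ hM hrow hcol hsupp
  have hmem : γ ∈ (univ : Finset (Equiv.Perm (ι × Fin M))).image blockType := by
    have hpos : 0 < Fintype.card {σ : Equiv.Perm (ι × Fin M) // blockType σ = γ} := by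
      by_contra! h0
      rw [blockTypeWeight, Nat.le_zero.1 h0, Nat.cast_zero, zero_mul] at hweight
      exact (exp_pos _).not_ge hweight
    obtain ⟨σ, hσ⟩ := Fintype.card_pos_iff.1 hpos
    exact mem_image.2 ⟨σ, mem_univ _, hσ⟩
  rw [perm'_uniformBlowup_eq_sum]
  exact hweight.trans (single_le_sum (fun γ _ => blockTypeWeight_nonneg hθ M γ) hmem)

end BlockTypeWeight

section Rounding

lemma tendsto_nat_floor_mul_div_natCast {a : ℝ} (ha : 0 ≤ a) :
    Tendsto (fun M : ℕ => (⌊a * M⌋₊ : ℝ) / M) atTop (𝓝 a) :=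
  (tendsto_nat_floor_mul_div_atTop ha).comp tendsto_natCast_atTop_atTop

lemma sum_nat_floor_mul_le {T : Type*} {s : Finset T} {w : T → ℝ} (hw0 : ∀ t ∈ s, 0 ≤ w t)
    (hw1 : ∑ t ∈ s, w t ≤ 1) (M : ℕ) : ∑ t ∈ s, ⌊w t * M⌋₊ ≤ M := by
  have : ((∑ t ∈ s, ⌊w t * M⌋₊ : ℕ) : ℝ) ≤ M := by
    push_cast
    calc ∑ t ∈ s, (⌊w t * M⌋₊ : ℝ) ≤ ∑ t ∈ s, w t * M :=
          sum_le_sum fun t ht => Nat.floor_le (mul_nonneg (hw0 t ht) M.cast_nonneg)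
      _ ≤ M := by
          rw [← sum_mul]
          exact mul_le_of_le_one_left M.cast_nonneg hw1
  exact_mod_cast this

lemma exists_nat_approx_of_sum_eq_one {T : Type*} [Fintype T] [DecidableEq T] {w : T → ℝ}
    (hw0 : ∀ t, 0 ≤ w t) (hw1 : ∑ t, w t = 1) :
    ∃ m : ℕ → T → ℕ, (∀ M, ∑ t, m M t = M) ∧ (∀ M t, w t = 0 → m M t = 0) ∧
      ∀ t, Tendsto (fun M : ℕ => (m M t : ℝ) / M) atTop (𝓝 (w t)) := by
  -- Round `M * w t` down, except at one `t₀` with `w t₀ > 0`, which absorbs the remainder.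
  obtain ⟨t₀, ht₀⟩ : ∃ t₀, 0 < w t₀ := by
    by_contra! h
    simp [le_antisymm (h _) (hw0 _)] at hw1
  set rest : ℕ → ℕ := fun M => ∑ t ∈ univ.erase t₀, ⌊w t * M⌋₊
  have hrest (M : ℕ) : rest M ≤ M := sum_nat_floor_mul_le (fun t _ => hw0 t)
    ((sum_le_sum_of_subset_of_nonneg (erase_subset _ _) fun t _ _ => hw0 t).trans hw1.le) M
  refine ⟨fun M t => if t = t₀ then M - rest M else ⌊w t * M⌋₊, fun M => ?_, fun M t ht => ?_,
    fun t => ?_⟩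
  · dsimp only
    rw [← add_sum_erase _ _ (mem_univ t₀), if_pos rfl,
      sum_congr rfl fun t ht => if_neg (ne_of_mem_erase ht), Nat.sub_add_cancel (hrest M)]
  · dsimp only
    rw [if_neg (by rintro rfl; exact ht₀.ne' ht), ht, zero_mul, Nat.floor_zero]
  dsimp only
  by_cases ht : t = t₀
  · subst ht
    have hw : w t = 1 - ∑ s ∈ univ.erase t, w s := by
      rw [← hw1, ← add_sum_erase _ _ (mem_univ t), add_sub_cancel_right]
    rw [hw]
    refine ((tendsto_const_nhds.sub (tendsto_finsetSum _ fun s _ =>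
      tendsto_nat_floor_mul_div_natCast (hw0 s)))).congr' ?_
    filter_upwards [eventually_ne_atTop 0] with M hM
    have hM' : (M : ℝ) ≠ 0 := by exact_mod_cast hM
    rw [if_pos rfl, Nat.cast_sub (hrest M), Nat.cast_sum, sub_div, div_self hM', sum_div]
  · simpa only [if_neg ht] using tendsto_nat_floor_mul_div_natCast (hw0 t)

theorem exists_nat_approx_of_mem_doublyStochastic {ι : Type*} [Fintype ι] [DecidableEq ι]
    {γ : Matrix ι ι ℝ} (hγ : γ ∈ doublyStochastic ℝ ι) :
    ∃ g : ℕ → Matrix ι ι ℕ, (∀ M i, ∑ j, g M i j = M) ∧ (∀ M j, ∑ i, g M i j = M) ∧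
      (∀ M i j, γ i j = 0 → g M i j = 0) ∧
      Tendsto (fun M : ℕ => (M : ℝ)⁻¹ • (g M).map (↑)) atTop (𝓝 γ) := by
  obtain ⟨w, hw0, hw1, hwγ⟩ := exists_eq_sum_perm_of_mem_doublyStochastic hγ
  obtain ⟨m, hm_sum, hm_zero, hm_lim⟩ := exists_nat_approx_of_sum_eq_one hw0 hw1
  have hentry (i j : ι) : γ i j = ∑ σ : Equiv.Perm ι, if σ i = j then w σ else 0 := by
    simp [← hwγ, Matrix.sum_apply, Equiv.Perm.permMatrix, PEquiv.toMatrix_apply]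
  refine ⟨fun M => Matrix.of fun i j => ∑ σ : Equiv.Perm ι, if σ i = j then m M σ else 0,
    fun M i => ?_, fun M j => ?_, fun M i j hij => ?_, ?_⟩
  · simp only [Matrix.of_apply]
    rw [sum_comm]
    simp [hm_sum]
  · simp only [Matrix.of_apply]
    rw [sum_comm]
    refine (sum_congr rfl fun σ _ => ?_).trans (hm_sum M)
    exact (Equiv.sum_comp σ fun k => if k = j then m M σ else 0).trans (by simp)
  · rw [hentry, sum_eq_zero_iff_of_nonneg fun σ _ => by split_ifs <;> simp [hw0]] at hij
    refine sum_eq_zero fun σ _ => ?_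
    split_ifs with h
    · exact hm_zero M σ (by simpa [h] using hij σ (mem_univ σ))
    · rfl
  · refine tendsto_pi_nhds.2 fun i => tendsto_pi_nhds.2 fun j => ?_
    simp only [Matrix.smul_apply, Matrix.map_apply, Matrix.of_apply, Nat.cast_sum, Nat.cast_ite,
      Nat.cast_zero, smul_eq_mul, mul_sum, hentry]
    refine tendsto_finsetSum _ fun σ _ => ?_
    split_ifs
    · simpa [div_eq_inv_mul] using hm_lim σ
    · simp

end Rounding

section Main

variable {ι : Type*} [Fintype ι] [DecidableEq ι]

theorem exists_tendsto_exp_mul_le_perm'_uniformBlowup {θ : Matrix ι ι ℝ}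
    (hθ : ∀ i j, 0 ≤ θ i j) {γ : Matrix ι ι ℝ} (hγ : γ ∈ supportedDoublyStochastic θ) :
    ∃ b : ℕ → ℝ, Tendsto b atTop (𝓝 (sinkhornObjective θ γ)) ∧
      ∀ᶠ M in atTop, exp (M * b M) ≤ perm' (uniformBlowup θ M) := by
  obtain ⟨g, hrow, hcol, hsupp, hlim⟩ := exists_nat_approx_of_mem_doublyStochastic hγ.1
  refine ⟨fun M => sinkhornObjective θ ((M : ℝ)⁻¹ • (g M).map (↑)) -
    Fintype.card ι ^ 2 * ((1 + log M) / M), ?_, ?_⟩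
  · simpa using ((continuous_sinkhornObjective θ).tendsto γ |>.comp hlim).sub
      (tendsto_one_add_log_div_atTop.const_mul ((Fintype.card ι : ℝ) ^ 2))
  · filter_upwards [eventually_gt_atTop 0] with M hM
    convert exp_le_perm'_uniformBlowup hθ hM (hrow M) (hcol M)
      (fun i j h => hsupp M i j (hγ.2 i j h)) using 2
    field_simp

lemma eventually_perm'_uniformBlowup_pos {θ : Matrix ι ι ℝ} (hθ : ∀ i j, 0 ≤ θ i j)
    (hK : (supportedDoublyStochastic θ).Nonempty) :
    ∀ᶠ M in atTop, 0 < perm' (uniformBlowup θ M) := by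
  obtain ⟨γ, hγ⟩ := hK
  obtain ⟨b, -, hb⟩ := exists_tendsto_exp_mul_le_perm'_uniformBlowup hθ hγ
  exact hb.mono fun M h => (exp_pos _).trans_le h

theorem tendsto_log_perm'_uniformBlowup_div {θ : Matrix ι ι ℝ} (hθ : ∀ i j, 0 ≤ θ i j)
    (hK : (supportedDoublyStochastic θ).Nonempty) :
    Tendsto (fun M : ℕ => log (perm' (uniformBlowup θ M)) / M) atTop
      (𝓝 (sSup (sinkhornObjective θ '' supportedDoublyStochastic θ))) := by
  have hpos := eventually_perm'_uniformBlowup_pos hθ hK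
  refine tendsto_csSup_of_upper_of_lower (hK.image _)
    ⟨fun M => sSup (sinkhornObjective θ '' supportedDoublyStochastic θ) +
      (Fintype.card ι + 2) * Fintype.card ι * ((1 + log M) / M), ?_, ?_⟩ ?_
  · simpa using tendsto_const_nhds.add
      (tendsto_one_add_log_div_atTop.const_mul (((Fintype.card ι : ℝ) + 2) * Fintype.card ι))
  · filter_upwards [eventually_gt_atTop 0, hpos] with M hM hpM
    have hM' : (0 : ℝ) < M := by exact_mod_cast hM
    rw [div_le_iff₀ hM', log_le_iff_le_exp hpM]
    convert perm'_uniformBlowup_le hθ hM using 2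
    field_simp
  · rintro _ ⟨γ, hγ, rfl⟩
    obtain ⟨b, hb, hle⟩ := exists_tendsto_exp_mul_le_perm'_uniformBlowup hθ hγ
    refine ⟨b, hb, ?_⟩
    filter_upwards [eventually_gt_atTop 0, hle, hpos] with M hM h hpM
    have hM' : (0 : ℝ) < M := by exact_mod_cast hM
    rw [le_div_iff₀ hM', mul_comm, le_log_iff_exp_le hpM]
    exact h

end Main

theorem statement_14_general (n : ℕ)
    (θ : Matrix (Fin n) (Fin n) ℝ) (hθ : ∀ i j, 0 ≤ θ i j)
    (hex : ∃ σ : Equiv.Perm (Fin n), 0 < ∏ i, θ i (σ i)) :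
    Filter.limsup
      (fun M : ℕ =>
        (perm' (Matrix.kroneckerMap (· * ·) θ (Matrix.of fun _ _ : Fin M => 1 / (M : ℝ)))) ^
          (1 / (M : ℝ)))
      Filter.atTop =
    sSup {v : ℝ | ∃ γ : Matrix (Fin n) (Fin n) ℝ,
      (∀ i j, 0 ≤ γ i j) ∧ (∀ i, ∑ j, γ i j = 1) ∧ (∀ j, ∑ i, γ i j = 1) ∧
      (∀ i j, θ i j = 0 → γ i j = 0) ∧
      v = Real.exp ((∑ i, ∑ j, γ i j * Real.log (θ i j)) - n -
        ∑ i, ∑ j, γ i j * Real.log (γ i j))} := by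
  have hK := supportedDoublyStochastic_nonempty hex
  have hlim := tendsto_rpow_one_div_of_tendsto_log_div (eventually_perm'_uniformBlowup_pos hθ hK)
    (tendsto_log_perm'_uniformBlowup_div hθ hK)
  unfold uniformBlowup at hlim
  rw [hlim.limsup_eq, Monotone.map_csSup_of_continuousAt continuous_exp.continuousAt
    exp_monotone (hK.image _) (bddAbove_sinkhornObjective_image θ), ← Set.image_comp]
  congr 1
  ext v
  simp [supportedDoublyStochastic, mem_doublyStochastic_iff_sum, sinkhornObjective, negMulLog,
    ← sub_eq_add_neg, eq_comm, and_assoc]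

/-- For `n ≥ 1` and a nonnegative `n×n` matrix `θ` having a permutation of
positive weight: `limsup_{M→∞} perm(θ ⊗ U_{M,M})^{1/M}` equals the supremum of
`exp(Σ_{i,j} γ(i,j)·log θ(i,j) − n − Σ_{i,j} γ(i,j)·log γ(i,j))` over all doubly stochastic
`γ` with `γ(i,j) = 0` whenever `θ(i,j) = 0` (in Lean, `Real.log 0 = 0` realizes the
convention that such entries contribute `0`). -/
theorem statement_14 (n : ℕ) (hn : 1 ≤ n)
    (θ : Matrix (Fin n) (Fin n) ℝ) (hθ : ∀ i j, 0 ≤ θ i j)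
    (hex : ∃ σ : Equiv.Perm (Fin n), 0 < ∏ i, θ i (σ i)) :
    Filter.limsup
      (fun M : ℕ =>
        (perm' (Matrix.kroneckerMap (· * ·) θ (Matrix.of fun _ _ : Fin M => 1 / (M : ℝ)))) ^
          (1 / (M : ℝ)))
      Filter.atTop =
    sSup {v : ℝ | ∃ γ : Matrix (Fin n) (Fin n) ℝ,
      (∀ i j, 0 ≤ γ i j) ∧ (∀ i, ∑ j, γ i j = 1) ∧ (∀ j, ∑ i, γ i j = 1) ∧
      (∀ i j, θ i j = 0 → γ i j = 0) ∧
      v = Real.exp ((∑ i, ∑ j, γ i j * Real.log (θ i j)) - n -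
        ∑ i, ∑ j, γ i j * Real.log (γ i j))} :=
  statement_14_general n θ hθ hex
end
end

section
/- Let n ≥ 1 and let θ be an n×n matrix with nonnegative real entries such that ∏_{i} θ(i,σ(i)) > 0 for at least one permutation σ ∈ S_n, and let p_θ(σ) = (∏_i θ(i,σ(i)))/perm(θ). Then perm(θ)/perm_{B,2}(θ) = ( Σ_{σ_1,σ_2 ∈ S_n} p_θ(σ_1)·p_θ(σ_2)·2^{−c(σ_1,σ_2)} )^{−1/2}, where c(σ_1,σ_2) denotes the number of cycles of length at least 2 in the cycle decomposition of the permutation σ_1∘σ_2^{−1}, and perm_{B,2}(θ) = ⟨perm(θ↑P_2)⟩^{1/2}. -/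
open scoped BigOperators

noncomputable section

/-- The `P_M`-lifting `θ↑P_M`: the `nM×nM` matrix with entries
`(θ↑P_M)((i,m),(j,m')) = θ(i,j)·P^{(i,j)}(m,m')`. -/
def liftMat {n M : ℕ} (θ : Matrix (Fin n) (Fin n) ℝ)
    (P : Fin n → Fin n → Equiv.Perm (Fin M)) :
    Matrix (Fin n × Fin M) (Fin n × Fin M) ℝ :=
  Matrix.of fun p q => θ p.1 q.1 * (if P p.1 q.1 p.2 = q.2 then 1 else 0)

/-- `⟨perm(θ↑P_M)⟩`: the arithmetic average of `perm(θ↑P_M)` over all `(M!)^{n²}`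
collections `P_M` of `n²` permutation matrices of size `M×M`. -/
def avgLiftPerm (n M : ℕ) (θ : Matrix (Fin n) (Fin n) ℝ) : ℝ :=
  (∑ P : Fin n → Fin n → Equiv.Perm (Fin M), perm' (liftMat θ P)) /
    (Fintype.card (Fin n → Fin n → Equiv.Perm (Fin M)) : ℝ)

/-! Expanding the permanents, `∑_P perm(θ↑P)` counts pairs `(P, τ)` of a lift and a permutation
`τ` of `[n] × [2]` supported by `θ↑P`. The weight of `τ` only depends on its row pairs
`g i = {τ(i,0).1, τ(i,1).1}`, a bipartite multigraph that is `2`-regular on both sides, and over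
each realizable `g` there are exactly `2^{n²}` pairs `(P, τ)`. The same `g` arise as
`g i = {σ₁ i, σ₂ i}` (Hall's theorem splits `g` into two perfect matchings), and the pairs
`(σ₁, σ₂)` over a given `g` correspond to the sets of nontrivial cycles of `σ₁ σ₂⁻¹` along
which the two matchings are exchanged, so there are `2^{c(σ₁,σ₂)}` of them. Hence both
`⟨perm(θ↑P_2)⟩` and `∑ p_θ(σ₁) p_θ(σ₂) 2^{-c(σ₁,σ₂)} · perm(θ)²` equal the total weight of the
realizable `g`, and the theorem is a rearrangement of this identity. -/

open Equiv Finset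

namespace Equiv.Perm

variable {α : Type*} [Fintype α] [DecidableEq α]

theorem cycleFactorsFinset_subset_iff {ρ π : Perm α} :
    ρ.cycleFactorsFinset ⊆ π.cycleFactorsFinset ↔ ∀ x, ρ x = x ∨ ρ x = π x := by
  constructor
  · intro h x
    refine or_iff_not_imp_left.mpr fun hx => ?_
    have hc := h (cycleOf_mem_cycleFactorsFinset_iff.mpr (mem_support.mpr hx))
    rw [← cycleOf_apply_self ρ x]
    exact (mem_cycleFactorsFinset_iff.mp hc).2 x (by rwa [mem_support, cycleOf_apply_self])
  · intro h c hc
    obtain ⟨hcyc, hcρ⟩ := mem_cycleFactorsFinset_iff.mp hc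
    refine mem_cycleFactorsFinset_iff.mpr ⟨hcyc, fun a ha => ?_⟩
    have hρa : ρ a ≠ a := hcρ a ha ▸ mem_support.mp ha
    rw [hcρ a ha, (h a).resolve_left hρa]

theorem card_cycleFactorsFinset_subset (π : Perm α) :
    Fintype.card {ρ : Perm α // ρ.cycleFactorsFinset ⊆ π.cycleFactorsFinset} =
      2 ^ Multiset.card π.cycleType := by
  rw [cycleType_def, Multiset.card_map, ← Finset.card_def, ← card_powerset,
    ← Fintype.card_coe]
  refine Fintype.card_of_bijective
    (f := fun ρ => ⟨ρ.1.cycleFactorsFinset, mem_powerset.mpr ρ.2⟩) ⟨?_, ?_⟩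
  · intro ρ ρ' h
    exact Subtype.ext (cycleFactorsFinset_injective (congrArg Subtype.val h))
  · rintro ⟨S, hS⟩
    have hS : S ⊆ π.cycleFactorsFinset := mem_powerset.mp hS
    have hdisj : (S : Set (Perm α)).Pairwise Disjoint :=
      (cycleFactorsFinset_pairwise_disjoint π).mono (by exact_mod_cast hS)
    have hρ : (S.noncommProd id (hdisj.mono' fun _ _ => Disjoint.commute)).cycleFactorsFinset = S :=
      cycleFactorsFinset_eq_finset.mpr
        ⟨fun f hf => (mem_cycleFactorsFinset_iff.mp (hS hf)).1, hdisj, rfl⟩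
    exact ⟨⟨_, hρ.symm ▸ hS⟩, Subtype.ext hρ⟩

theorem mk_apply_inv_eq_of_cycleFactorsFinset_subset {ρ π : Perm α}
    (h : ρ.cycleFactorsFinset ⊆ π.cycleFactorsFinset) (x : α) :
    s(π (ρ⁻¹ x), ρ x) = s(π x, x) := by
  rw [cycleFactorsFinset_subset_iff] at h
  have hy : ρ (ρ⁻¹ x) = x := ρ.apply_symm_apply x
  rcases h (ρ⁻¹ x) with hm | hm <;> rw [hy] at hm
  · rw [← hm] at hy ⊢
    rw [hy]
  · rcases h x with hx | hx
    · rw [hx, Perm.inv_eq_iff_eq.mpr hx.symm]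
    · rw [← hm, hx, Sym2.eq_swap]

end Equiv.Perm

theorem card_perm_comp_eq {X Y : Type*} [Fintype X] [DecidableEq X] [Fintype Y] [DecidableEq Y]
    (f : X → Y) (τ₀ : Perm X) :
    Fintype.card {τ : Perm X // f ∘ τ = f ∘ τ₀} = ∏ y, (Fintype.card {x // f x = y}).factorial := by
  rw [← DomMulAct.stabilizer_card f]
  refine Fintype.card_congr ((Equiv.mulRight τ₀⁻¹).subtypeEquiv fun τ => ⟨fun h => ?_, fun h => ?_⟩)
  · funext x
    simpa using congrFun h (τ₀⁻¹ x)
  · funext x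
    simpa using congrFun h (τ₀ x)

theorem sum_mul_eq_sum_image {ι κ R : Type*} [Fintype ι] [DecidableEq κ] [CommSemiring R]
    (φ : ι → κ) (u : ι → R) (hu : ∀ a, ∑ b with φ b = φ a, u b = 1) (H : κ → R) :
    ∑ a, H (φ a) * u a = ∑ g ∈ univ.image φ, H g := by
  refine (sum_image' _ fun a _ => ?_).symm
  calc H (φ a) = H (φ a) * ∑ b with φ b = φ a, u b := by rw [hu, mul_one]
    _ = _ := by
      rw [mul_sum]
      exact sum_congr rfl fun b hb => by rw [(mem_filter.mp hb).2]

section RowPairs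

variable {α β : Type*}

def rowPairs (f : α × Fin 2 → β) (i : α) : Sym2 β := s(f (i, 0), f (i, 1))

def rowPairsOfPerms (p : Perm α × Perm α) (i : α) : Sym2 α := s(p.1 i, p.2 i)

def rowWeight [Fintype α] {R : Type*} [CommMonoid R] (θ : Matrix α α R) (g : α → Sym2 α) : R :=
  ∏ i, Sym2.lift ⟨fun a b => θ i a * θ i b, fun _ _ => mul_comm _ _⟩ (g i)

theorem rowWeight_rowPairs [Fintype α] {R : Type*} [CommMonoid R] (θ : Matrix α α R)
    (τ : Perm (α × Fin 2)) : rowWeight θ (rowPairs (Prod.fst ∘ τ)) = ∏ x, θ x.1 (τ x).1 := by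
  simp [rowWeight, rowPairs, Fintype.prod_prod_type, Fin.prod_univ_two]

theorem rowWeight_rowPairsOfPerms [Fintype α] {R : Type*} [CommMonoid R] (θ : Matrix α α R)
    (p : Perm α × Perm α) :
    rowWeight θ (rowPairsOfPerms p) = (∏ i, θ i (p.1 i)) * ∏ i, θ i (p.2 i) := by
  simp [rowWeight, rowPairsOfPerms, prod_mul_distrib]

theorem exists_perm_eq_comp_of_rowPairs_eq {f f' : α × Fin 2 → β}
    (h : rowPairs f = rowPairs f') : ∃ r : Perm (α × Fin 2), f = f' ∘ r := by
  have hrow : ∀ i, ∃ e : Perm (Fin 2), ∀ m, f (i, m) = f' (i, e m) := by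
    intro i
    rcases Sym2.eq_iff.mp (congrFun h i) with ⟨h0, h1⟩ | ⟨h0, h1⟩
    · exact ⟨1, fun m => by fin_cases m <;> simp [h0, h1]⟩
    · exact ⟨swap 0 1, fun m => by fin_cases m <;> simp [h0, h1]⟩
  choose e he using hrow
  exact ⟨prodShear (Equiv.refl α) e, funext fun x => he x.1 x.2⟩

theorem exists_rowPairs_eq_rowPairsOfPerms (p : Perm α × Perm α) :
    ∃ τ : Perm (α × Fin 2), rowPairs (Prod.fst ∘ τ) = rowPairsOfPerms p :=
  ⟨(prodComm _ _).trans ((prodShear (Equiv.refl _) ![p.1, p.2]).trans (prodComm _ _)), rfl⟩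

theorem eq_of_rowPairsOfPerms_eq_of_snd_eq {p q : Perm α × Perm α}
    (h : rowPairsOfPerms p = rowPairsOfPerms q) (h₂ : p.2 = q.2) : p = q := by
  refine Prod.ext (Equiv.ext fun i => ?_) h₂
  have := congrFun h i
  rwa [rowPairsOfPerms, rowPairsOfPerms, h₂, Sym2.congr_left] at this

theorem ite_add_ite_eq_of_mk_eq [DecidableEq β] {a b c d : β} (h : s(a, b) = s(c, d)) (j : β) :
    ((if a = j then 1 else 0) + if b = j then 1 else 0 : ℕ) =
      (if c = j then 1 else 0) + if d = j then 1 else 0 := by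
  rcases Sym2.eq_iff.mp h with ⟨rfl, rfl⟩ | ⟨rfl, rfl⟩
  · rfl
  · exact add_comm _ _

variable [Fintype α] [DecidableEq α] [Fintype β] [DecidableEq β]

theorem card_rowPairs_eq (g : α → Sym2 β) :
    Fintype.card {f : α × Fin 2 → β // rowPairs f = g} =
      ∏ i, Fintype.card {q : β × β // s(q.1, q.2) = g i} := by
  let e : (α × Fin 2 → β) ≃ (α → β × β) :=
    (curry α (Fin 2) β).trans (piCongrRight fun _ => finTwoArrowEquiv β)
  rw [← Fintype.card_pi]
  exact Fintype.card_congr ((e.subtypeEquiv (p := fun f => rowPairs f = g)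
    (q := fun v => ∀ i, s((v i).1, (v i).2) = g i) fun f => funext_iff).trans
    (subtypePiEquivPi (p := fun i (q : β × β) => s(q.1, q.2) = g i)))

theorem two_mul_card_mk_eq (z : Sym2 β) :
    2 * Fintype.card {q : β × β // s(q.1, q.2) = z} = 2 ^ #z.toFinset := by
  induction z using Sym2.ind with
  | _ a b =>
    have : ({q : β × β | s(q.1, q.2) = s(a, b)} : Finset (β × β)) = {(a, b), (b, a)} := by
      ext ⟨c, d⟩
      simp
    rw [Fintype.card_subtype, this, Sym2.toFinset_mk_eq]
    by_cases hab : a = b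
    · simp [hab]
    · rw [card_pair hab, card_pair fun h => hab (Prod.ext_iff.mp h).1]
      rfl

end RowPairs

section RowPairsOfPerms

variable {α : Type*} [Fintype α] [DecidableEq α]

theorem cycleFactorsFinset_subset_of_rowPairsOfPerms_eq {p q : Perm α × Perm α}
    (h : rowPairsOfPerms q = rowPairsOfPerms p) :
    (q.2 * p.2⁻¹).cycleFactorsFinset ⊆ (p.1 * p.2⁻¹).cycleFactorsFinset := by
  refine Perm.cycleFactorsFinset_subset_iff.mpr fun x => ?_
  have hx := congrFun h (p.2⁻¹ x)
  simp only [rowPairsOfPerms, Perm.coe_inv, apply_symm_apply] at hx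
  have : q.2 (p.2⁻¹ x) ∈ s(p.1 (p.2⁻¹ x), x) := hx ▸ Sym2.mem_mk_right _ _
  simpa [Sym2.mem_iff, or_comm] using this

theorem rowPairsOfPerms_of_cycleFactorsFinset_subset (p : Perm α × Perm α) {ρ : Perm α}
    (hρ : ρ.cycleFactorsFinset ⊆ (p.1 * p.2⁻¹).cycleFactorsFinset) :
    rowPairsOfPerms (p.1 * p.2⁻¹ * ρ⁻¹ * p.2, ρ * p.2) = rowPairsOfPerms p := by
  funext i
  have := Perm.mk_apply_inv_eq_of_cycleFactorsFinset_subset hρ (p.2 i)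
  simpa [rowPairsOfPerms] using this

/-- The pairs with the same rows as `p` are obtained by exchanging `p.1` and `p.2` along a set of
nontrivial cycles of `p.1 * p.2⁻¹`. -/
theorem card_rowPairsOfPerms_fiber (p : Perm α × Perm α) :
    Fintype.card {q // rowPairsOfPerms q = rowPairsOfPerms p} =
      2 ^ Multiset.card (p.1 * p.2⁻¹).cycleType := by
  rw [← Perm.card_cycleFactorsFinset_subset]
  exact Fintype.card_congr
    { toFun := fun q => ⟨q.1.2 * p.2⁻¹, cycleFactorsFinset_subset_of_rowPairsOfPerms_eq q.2⟩
      invFun := fun ρ => ⟨_, rowPairsOfPerms_of_cycleFactorsFinset_subset p ρ.2⟩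
      left_inv := fun q => Subtype.ext (eq_of_rowPairsOfPerms_eq_of_snd_eq
        ((rowPairsOfPerms_of_cycleFactorsFinset_subset p
          (cycleFactorsFinset_subset_of_rowPairsOfPerms_eq q.2)).trans q.2.symm) (by simp))
      right_inv := fun ρ => Subtype.ext (by simp) }

end RowPairsOfPerms

section Lifts

variable {α : Type*} [Fintype α] [DecidableEq α]

theorem card_fst_fiber (j : α) : Fintype.card {y : α × Fin 2 // y.1 = j} = 2 := by
  rw [Fintype.card_congr (prodSubtypeFstEquivSubtypeProd (p := (· = j)))]
  simp

theorem card_filter_fst_perm_eq (τ : Perm (α × Fin 2)) (j : α) : #{x | (τ x).1 = j} = 2 := by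
  rw [← Fintype.card_subtype, Fintype.card_congr (τ.subtypeEquiv (q := (·.1 = j)) fun _ => Iff.rfl),
    card_fst_fiber]

/-- Hall's theorem: the `2`-regular bipartite multigraph `rowPairs (Prod.fst ∘ τ)` is the union
of two perfect matchings. -/
theorem exists_rowPairsOfPerms_eq_rowPairs (τ : Perm (α × Fin 2)) :
    ∃ p, rowPairsOfPerms p = rowPairs (Prod.fst ∘ τ) := by
  have hall : ∀ S : Finset α, #S ≤ #(S.biUnion fun i => (rowPairs (Prod.fst ∘ τ) i).toFinset) := by
    intro S
    have hsub : (S ×ˢ univ).map τ.toEmbedding ⊆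
        (S.biUnion fun i => (rowPairs (Prod.fst ∘ τ) i).toFinset) ×ˢ (univ : Finset (Fin 2)) := by
      intro y hy
      obtain ⟨⟨i, m⟩, hx, rfl⟩ := mem_map.mp hy
      refine mem_product.mpr ⟨mem_biUnion.mpr ⟨i, (mem_product.mp hx).1, ?_⟩, mem_univ _⟩
      rw [Sym2.mem_toFinset, rowPairs, Sym2.mem_iff]
      fin_cases m <;> simp
    simpa [card_product] using card_le_card hsub
  obtain ⟨f, hf, hmem⟩ := (all_card_le_biUnion_card_iff_exists_injective _).mp hall
  have hmem' : ∀ i, f i ∈ rowPairs (Prod.fst ∘ τ) i := fun i => Sym2.mem_toFinset.mp (hmem i)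
  set g : α → α := fun i => Sym2.Mem.other (hmem' i)
  have hfg : ∀ i, s(f i, g i) = rowPairs (Prod.fst ∘ τ) i := fun i => Sym2.other_spec _
  have hg : g.Surjective := by
    intro j
    -- each column is hit exactly twice by `τ`, and at most once by `f`
    have hcount : #{i | f i = j} + #{i | g i = j} = 2 := by
      rw [← card_filter_fst_perm_eq τ j, card_filter, card_filter, card_filter, ← sum_add_distrib,
        Fintype.sum_prod_type]
      refine sum_congr rfl fun i _ => ?_
      rw [Fin.sum_univ_two]
      exact ite_add_ite_eq_of_mk_eq (hfg i) j
    have hf1 : #{i | f i = j} ≤ 1 :=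
      card_le_one.mpr fun a ha b hb => hf ((mem_filter.mp ha).2.trans (mem_filter.mp hb).2.symm)
    obtain ⟨i, hi⟩ := card_pos.mp (by omega : 0 < #{i | g i = j})
    exact ⟨i, (mem_filter.mp hi).2⟩
  exact ⟨(Equiv.ofBijective f (Finite.injective_iff_bijective.mp hf),
    Equiv.ofBijective g (Finite.surjective_iff_bijective.mp hg)), funext hfg⟩

theorem image_rowPairs_eq_image_rowPairsOfPerms :
    univ.image (fun τ : Perm (α × Fin 2) => rowPairs (Prod.fst ∘ τ)) =
      univ.image rowPairsOfPerms := by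
  ext g
  simp only [mem_image, mem_univ, true_and]
  constructor
  · rintro ⟨τ, rfl⟩
    exact exists_rowPairsOfPerms_eq_rowPairs τ
  · rintro ⟨p, rfl⟩
    exact exists_rowPairs_eq_rowPairsOfPerms p

theorem card_perm_fin_two_eq_on (S : Finset (Fin 2)) (c : Fin 2 → Fin 2)
    (hc : ∀ m ∈ S, ∀ m' ∈ S, c m = c m' → m = m') :
    Fintype.card {p : Perm (Fin 2) // ∀ m ∈ S, p m = c m} = if S.Nonempty then 1 else 2 := by
  revert S c
  decide

-- The block `P i j` is determined by `τ` when row `i` meets column `j`, and free otherwise.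
theorem card_lift_compatible (τ : Perm (α × Fin 2)) :
    Fintype.card {P : α → α → Perm (Fin 2) // ∀ x, P x.1 (τ x).1 x.2 = (τ x).2} =
      ∏ i, 2 ^ #(rowPairs (Prod.fst ∘ τ) i).toFinsetᶜ := by
  let S : α → α → Finset (Fin 2) := fun i j => {m | (τ (i, m)).1 = j}
  have e : {P : α → α → Perm (Fin 2) // ∀ x, P x.1 (τ x).1 x.2 = (τ x).2} ≃
      ∀ i j, {p : Perm (Fin 2) // ∀ m ∈ S i j, p m = (τ (i, m)).2} :=
    (subtypeEquivRight fun P => ⟨fun h i j m hm => (mem_filter.mp hm).2 ▸ h (i, m),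
      fun h (x : α × Fin 2) => h x.1 (τ x).1 x.2 (by simp [S])⟩).trans
      (subtypePiEquivPi.trans (piCongrRight fun _ => subtypePiEquivPi))
  rw [Fintype.card_congr e, Fintype.card_pi]
  refine prod_congr rfl fun i _ => ?_
  have hS : ∀ j, (S i j).Nonempty ↔ j ∈ (rowPairs (Prod.fst ∘ τ) i).toFinset := fun j => by
    simp [S, rowPairs, Sym2.mem_iff, filter_nonempty_iff, Fin.exists_fin_two, eq_comm]
  rw [Fintype.card_pi]
  calc ∏ j, Fintype.card {p : Perm (Fin 2) // ∀ m ∈ S i j, p m = (τ (i, m)).2}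
      = ∏ j, if j ∈ (rowPairs (Prod.fst ∘ τ) i).toFinsetᶜ then 2 else 1 := by
        refine prod_congr rfl fun j _ => ?_
        rw [card_perm_fin_two_eq_on _ _ fun m hm m' hm' h => congrArg Prod.snd (τ.injective
          (Prod.ext ((mem_filter.mp hm).2.trans (mem_filter.mp hm').2.symm) h))]
        simp [hS]
    _ = _ := by rw [prod_ite_mem, univ_inter, prod_const]

theorem card_rowPairs_fiber (τ₀ : Perm (α × Fin 2)) :
    Fintype.card {τ : Perm (α × Fin 2) // rowPairs (Prod.fst ∘ τ) = rowPairs (Prod.fst ∘ τ₀)} =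
      2 ^ Fintype.card α *
        Fintype.card {f : α × Fin 2 → α // rowPairs f = rowPairs (Prod.fst ∘ τ₀)} := by
  simp only [Fintype.card_subtype]
  rw [card_eq_sum_card_fiberwise (f := fun τ : Perm (α × Fin 2) => Prod.fst ∘ τ)
    (t := {f | rowPairs f = rowPairs (Prod.fst ∘ τ₀)}) fun τ hτ => by simpa using hτ,
    mul_comm, ← smul_eq_mul, ← sum_const]
  refine sum_congr rfl fun f hf => ?_
  obtain ⟨r, rfl⟩ := exists_perm_eq_comp_of_rowPairs_eq (mem_filter.mp hf).2
  rw [filter_filter, filter_congr fun τ _ => and_iff_right_of_imp fun h => h ▸ (mem_filter.mp hf).2,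
    ← Fintype.card_subtype]
  exact (card_perm_comp_eq Prod.fst (τ₀ * r)).trans (by simp [card_fst_fiber])

theorem card_rowPairs_fiber_mul_prod_two_pow (τ₀ : Perm (α × Fin 2)) :
    Fintype.card {τ : Perm (α × Fin 2) // rowPairs (Prod.fst ∘ τ) = rowPairs (Prod.fst ∘ τ₀)} *
      ∏ i, 2 ^ #(rowPairs (Prod.fst ∘ τ₀) i).toFinsetᶜ =
        2 ^ (Fintype.card α * Fintype.card α) := by
  rw [card_rowPairs_fiber, card_rowPairs_eq]
  calc 2 ^ Fintype.card α * (∏ i, Fintype.card {q : α × α // s(q.1, q.2) = rowPairs _ i}) *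
        ∏ i, 2 ^ #(rowPairs (Prod.fst ∘ τ₀) i).toFinsetᶜ
      = ∏ i, 2 * Fintype.card {q : α × α // s(q.1, q.2) = rowPairs (Prod.fst ∘ τ₀) i} *
          2 ^ #(rowPairs (Prod.fst ∘ τ₀) i).toFinsetᶜ := by
        rw [prod_mul_distrib, prod_mul_distrib, prod_const, card_univ]
    _ = ∏ _i : α, 2 ^ Fintype.card α :=
        prod_congr rfl fun i _ => by rw [two_mul_card_mk_eq, ← pow_add, card_add_card_compl]
    _ = _ := by rw [prod_const, card_univ, ← pow_mul]

end Lifts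

section Main

variable {n : ℕ}

theorem sum_perm_liftMat (θ : Matrix (Fin n) (Fin n) ℝ) :
    ∑ P : Fin n → Fin n → Perm (Fin 2), perm' (liftMat θ P) =
      ∑ τ : Perm (Fin n × Fin 2), rowWeight θ (rowPairs (Prod.fst ∘ τ)) *
        Fintype.card {P : Fin n → Fin n → Perm (Fin 2) // ∀ x, P x.1 (τ x).1 x.2 = (τ x).2} := by
  simp only [perm', liftMat, Matrix.of_apply, prod_mul_distrib, prod_boole]
  rw [sum_comm]
  refine sum_congr rfl fun τ _ => ?_
  rw [← mul_sum, rowWeight_rowPairs, Fintype.card_subtype]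
  simp [sum_boole]

theorem sum_perm_liftMat_eq (θ : Matrix (Fin n) (Fin n) ℝ) :
    ∑ P : Fin n → Fin n → Perm (Fin 2), perm' (liftMat θ P) =
      2 ^ (n * n) * ∑ p : Perm (Fin n) × Perm (Fin n),
        rowWeight θ (rowPairsOfPerms p) * ((2 : ℝ) ^ Multiset.card (p.1 * p.2⁻¹).cycleType)⁻¹ := by
  have hτ : ∀ τ₀ : Perm (Fin n × Fin 2),
      ∑ τ ∈ univ.filter fun τ : Perm (Fin n × Fin 2) =>
          rowPairs (Prod.fst ∘ τ) = rowPairs (Prod.fst ∘ τ₀),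
        (Fintype.card {P : Fin n → Fin n → Perm (Fin 2) // ∀ x, P x.1 (τ x).1 x.2 = (τ x).2} : ℝ) /
          2 ^ (n * n) = 1 := by
    intro τ₀
    rw [sum_congr rfl fun τ hτ => by rw [card_lift_compatible, (mem_filter.mp hτ).2], sum_const,
      nsmul_eq_mul, ← Fintype.card_subtype, mul_div_assoc', div_eq_one_iff_eq (by positivity)]
    exact_mod_cast (card_rowPairs_fiber_mul_prod_two_pow τ₀).trans (by rw [Fintype.card_fin])
  have hp : ∀ p₀ : Perm (Fin n) × Perm (Fin n),
      ∑ p ∈ univ.filter fun p => rowPairsOfPerms p = rowPairsOfPerms p₀,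
        ((2 : ℝ) ^ Multiset.card (p.1 * p.2⁻¹).cycleType)⁻¹ = 1 := by
    intro p₀
    rw [sum_congr rfl fun p hp => by rw [← Nat.cast_two (R := ℝ), ← Nat.cast_pow,
      ← card_rowPairsOfPerms_fiber, (mem_filter.mp hp).2], sum_const, nsmul_eq_mul,
      ← Fintype.card_subtype, mul_inv_cancel₀]
    exact Nat.cast_ne_zero.mpr (Fintype.card_pos_iff.mpr ⟨⟨p₀, rfl⟩⟩).ne'
  rw [sum_perm_liftMat, sum_mul_eq_sum_image rowPairsOfPerms _ hp,
    ← image_rowPairs_eq_image_rowPairsOfPerms, ← sum_mul_eq_sum_image _ _ hτ, mul_sum]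
  refine sum_congr rfl fun τ _ => ?_
  rw [mul_div_assoc', mul_div_cancel₀ _ (by positivity)]

theorem avgLiftPerm_two_eq (θ : Matrix (Fin n) (Fin n) ℝ) :
    avgLiftPerm n 2 θ = ∑ σ₁ : Perm (Fin n), ∑ σ₂ : Perm (Fin n),
      (∏ i, θ i (σ₁ i)) * (∏ i, θ i (σ₂ i)) *
        ((2 : ℝ) ^ Multiset.card (σ₁ * σ₂⁻¹).cycleType)⁻¹ := by
  have hcard : (Fintype.card (Fin n → Fin n → Perm (Fin 2)) : ℝ) = 2 ^ (n * n) := by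
    simp [Fintype.card_perm, pow_mul]
  rw [avgLiftPerm, sum_perm_liftMat_eq, hcard, mul_div_cancel_left₀ _ (by positivity),
    Fintype.sum_prod_type]
  simp only [rowWeight_rowPairsOfPerms]

end Main

theorem div_rpow_half_eq_div_sq_rpow_neg_half {a b : ℝ} (ha : 0 < a) (hb : 0 < b) :
    a / b ^ (1 / 2 : ℝ) = (b / a ^ 2) ^ (-(1 / 2 : ℝ)) := by
  rw [Real.rpow_neg (by positivity), Real.div_rpow hb.le (by positivity), ← Real.sqrt_eq_rpow,
    ← Real.sqrt_eq_rpow, Real.sqrt_sq ha.le, inv_div]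

theorem statement_16_general (n : ℕ)
    (θ : Matrix (Fin n) (Fin n) ℝ) (hθ : ∀ i j, 0 ≤ θ i j)
    (hex : ∃ σ : Equiv.Perm (Fin n), 0 < ∏ i, θ i (σ i)) :
    perm' θ / (avgLiftPerm n 2 θ) ^ (1 / (2 : ℝ)) =
      (∑ σ₁ : Equiv.Perm (Fin n), ∑ σ₂ : Equiv.Perm (Fin n),
          ((∏ i, θ i (σ₁ i)) / perm' θ) * ((∏ i, θ i (σ₂ i)) / perm' θ) *
            ((2 : ℝ) ^ (Multiset.card (σ₁ * σ₂⁻¹).cycleType))⁻¹) ^ (-(1 / (2 : ℝ))) := by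
  obtain ⟨σ₀, hσ₀⟩ := hex
  have hw : ∀ σ : Perm (Fin n), 0 ≤ ∏ i, θ i (σ i) := fun σ => prod_nonneg fun i _ => hθ i (σ i)
  have hperm : 0 < perm' θ := sum_pos' (fun σ _ => hw σ) ⟨σ₀, mem_univ _, hσ₀⟩
  have havg : 0 < avgLiftPerm n 2 θ := by
    rw [avgLiftPerm_two_eq]
    refine sum_pos' (fun σ₁ _ => sum_nonneg fun σ₂ _ => ?_) ⟨σ₀, mem_univ _, ?_⟩
    · have := hw σ₁
      have := hw σ₂
      positivity
    · refine sum_pos' (fun σ₂ _ => ?_) ⟨σ₀, mem_univ _, by simpa using mul_pos hσ₀ hσ₀⟩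
      have := hw σ₂
      positivity
  rw [div_rpow_half_eq_div_sq_rpow_neg_half hperm havg, avgLiftPerm_two_eq, sum_div]
  congr 1
  refine sum_congr rfl fun σ₁ _ => ?_
  rw [sum_div]
  exact sum_congr rfl fun σ₂ _ => by ring

/-- For `n ≥ 1` and a nonnegative `n×n` matrix `θ` having a permutation of
positive weight, with `p_θ(σ) = (∏_i θ(i,σ(i)))/perm(θ)`:
`perm(θ)/perm_{B,2}(θ) = (Σ_{σ_1,σ_2} p_θ(σ_1)·p_θ(σ_2)·2^{−c(σ_1,σ_2)})^{−1/2}`,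
where `c(σ_1,σ_2)` is the number of cycles of length at least `2` of `σ_1∘σ_2⁻¹`
(the number of entries of its cycle type), and `perm_{B,2}(θ) = ⟨perm(θ↑P_2)⟩^{1/2}`. -/
theorem statement_16 (n : ℕ) (hn : 1 ≤ n)
    (θ : Matrix (Fin n) (Fin n) ℝ) (hθ : ∀ i j, 0 ≤ θ i j)
    (hex : ∃ σ : Equiv.Perm (Fin n), 0 < ∏ i, θ i (σ i)) :
    perm' θ / (avgLiftPerm n 2 θ) ^ (1 / (2 : ℝ)) =
      (∑ σ₁ : Equiv.Perm (Fin n), ∑ σ₂ : Equiv.Perm (Fin n),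
          ((∏ i, θ i (σ₁ i)) / perm' θ) * ((∏ i, θ i (σ₂ i)) / perm' θ) *
            ((2 : ℝ) ^ (Multiset.card (σ₁ * σ₂⁻¹).cycleType))⁻¹) ^ (-(1 / (2 : ℝ))) :=
  statement_16_general n θ hθ hex
end
end
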